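/- Let 0 < q < 1 be a real number, let y > 0 be a real number, and let n be a natural number. Then Σ_{k=0}^{n} (-1)^k [n choose k]_q · q^{binom(k+1,2) + n y} · [y]_q / [y+k]_q = q^{n y} · [n]_q! / ( [y+1]_q [y+2]_q ⋯ [y+n]_q ). -/

import Mathlib

/-- The `q`-number of a real `t`: `[t]_q = (1 - q^t)/(1 - q)` (real exponentiation). -/
noncomputable def qnumR (q t : ℝ) : ℝ := (1 - q ^ t) / (1 - q)

/-- The `q`-number `[m]_q = (1 - q^m)/(1 - q)`. -/
noncomputable def qnum (q : ℝ) (m : ℕ) : ℝ := (1 - q ^ m) / (1 - q)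

/-- The `q`-factorial `[n]_q! = [1]_q [2]_q ⋯ [n]_q`. -/
noncomputable def qfact (q : ℝ) (n : ℕ) : ℝ := ∏ i ∈ Finset.range n, qnum q (i + 1)

/-- The `q`-binomial coefficient `[n choose k]_q = [n]_q! / ([k]_q! [n-k]_q!)`. -/
noncomputable def qbinom (q : ℝ) (n k : ℕ) : ℝ := qfact q n / (qfact q k * qfact q (n - k))

/-!
With `a = q^y` every q-number `[y + k]_q` becomes `(1 - a q^k)/(1 - q)`, and the identity reduces to
the partial fraction expansion
`Σ_k (-1)^k [n choose k]_q q^{binom(k+1,2)} / (1 - a q^k) = (q;q)_n / (a;q)_{n+1}`.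
By the q-Pascal rule the left side `S_n(a)` satisfies `S_{n+1}(a) = S_n(a) - q^{n+1} S_n(a q)`,
and the right side satisfies the same recurrence, so the expansion follows by induction on `n`.
-/

open Finset

def qPoch (a q : ℝ) (n : ℕ) : ℝ := ∏ i ∈ range n, (1 - a * q ^ i)

lemma qPoch_succ (a q : ℝ) (n : ℕ) : qPoch a q (n + 1) = qPoch a q n * (1 - a * q ^ n) :=
  prod_range_succ _ n

lemma qPoch_succ' (a q : ℝ) (n : ℕ) : qPoch a q (n + 1) = (1 - a) * qPoch (a * q) q n := by
  simp only [qPoch, prod_range_succ', pow_succ, pow_zero, mul_one, mul_assoc, mul_comm]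

lemma qPoch_ne_zero {a q : ℝ} (h : ∀ k, 1 - a * q ^ k ≠ 0) (n : ℕ) : qPoch a q n ≠ 0 :=
  prod_ne_zero_iff.mpr fun k _ => h k

lemma one_sub_mul_mul_pow_ne_zero {a q : ℝ} (h : ∀ k, 1 - a * q ^ k ≠ 0) (k : ℕ) :
    1 - a * q * q ^ k ≠ 0 := by
  simpa [mul_assoc, ← pow_succ'] using h (k + 1)

lemma qfact_eq_qPoch_div (q : ℝ) (n : ℕ) : qfact q n = qPoch q q n / (1 - q) ^ n := by
  simp only [qfact, qnum, qPoch, prod_div_distrib, prod_const, card_range, pow_succ']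

lemma qfact_zero (q : ℝ) : qfact q 0 = 1 :=
  prod_range_zero _

lemma qfact_succ (q : ℝ) (n : ℕ) : qfact q (n + 1) = qfact q n * qnum q (n + 1) :=
  prod_range_succ _ n

lemma qnum_add (q : ℝ) (a b : ℕ) : qnum q (a + b) = qnum q b + q ^ b * qnum q a := by
  simp only [qnum, pow_add]
  ring

section Pascal

variable {q : ℝ} (hq : ∀ j : ℕ, q ^ (j + 1) ≠ 1)
include hq

lemma qnum_succ_ne_zero (j : ℕ) : qnum q (j + 1) ≠ 0 :=
  div_ne_zero (sub_ne_zero.mpr (hq j).symm) (sub_ne_zero.mpr (by simpa using (hq 0).symm))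

lemma qfact_ne_zero (n : ℕ) : qfact q n ≠ 0 :=
  prod_ne_zero_iff.mpr fun j _ => qnum_succ_ne_zero hq j

lemma qbinom_zero_right (n : ℕ) : qbinom q n 0 = 1 := by
  rw [qbinom, Nat.sub_zero, qfact_zero, one_mul, div_self (qfact_ne_zero hq n)]

lemma qbinom_self (n : ℕ) : qbinom q n n = 1 := by
  rw [qbinom, Nat.sub_self, qfact_zero, mul_one, div_self (qfact_ne_zero hq n)]

lemma qbinom_succ_succ {n k : ℕ} (hk : k < n) :
    qbinom q (n + 1) (k + 1) = qbinom q n (k + 1) + q ^ (n - k) * qbinom q n k := by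
  obtain ⟨m, rfl⟩ : ∃ m, n = k + m + 1 := ⟨n - k - 1, by omega⟩
  have hsub₁ : k + m + 1 + 1 - (k + 1) = m + 1 := by omega
  have hsub₂ : k + m + 1 - (k + 1) = m := by omega
  have hsub₃ : k + m + 1 - k = m + 1 := by omega
  have hnum : qnum q (k + m + 1 + 1) = qnum q (m + 1) + q ^ (m + 1) * qnum q (k + 1) := by
    rw [show k + m + 1 + 1 = k + 1 + (m + 1) by omega, qnum_add]
  simp only [qbinom, hsub₁, hsub₂, hsub₃, qfact_succ, hnum]
  have := qfact_ne_zero hq k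
  have := qfact_ne_zero hq m
  have := qnum_succ_ne_zero hq k
  have := qnum_succ_ne_zero hq m
  field_simp

end Pascal

noncomputable def qPartialFractionSum (q x : ℝ) (n : ℕ) : ℝ :=
  ∑ k ∈ range (n + 1), (-1) ^ k * qbinom q n k * q ^ ((k + 1).choose 2) / (1 - x * q ^ k)

/-- Holds termwise for every `x`, since both sides divide by the same `1 - x q^{k+1}`. -/
lemma qPartialFractionSum_succ {q : ℝ} (hq : ∀ j : ℕ, q ^ (j + 1) ≠ 1) (x : ℝ) (n : ℕ) :
    qPartialFractionSum q x (n + 1)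
      = qPartialFractionSum q x n - q ^ (n + 1) * qPartialFractionSum q (x * q) n := by
  set A : ℕ → ℝ := fun k => (-1) ^ k * qbinom q n k * q ^ ((k + 1).choose 2) / (1 - x * q ^ k)
  set B : ℕ → ℝ := fun k =>
    -(q ^ (n + 1) * ((-1) ^ k * qbinom q n k * q ^ ((k + 1).choose 2) / (1 - x * q * q ^ k)))
  have hchoose (j : ℕ) : (j + 2).choose 2 = (j + 1) + (j + 1).choose 2 := by
    rw [Nat.choose_succ_succ, Nat.choose_one_right]
  have hshift (j : ℕ) : x * q * q ^ j = x * q ^ (j + 1) := by ring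
  have hmid : ∀ k ∈ range n,
      (-1) ^ (k + 1) * qbinom q (n + 1) (k + 1) * q ^ ((k + 1 + 1).choose 2) / (1 - x * q ^ (k + 1))
        = A (k + 1) + B k := by
    intro k hk
    have hk := mem_range.mp hk
    simp only [A, B, qbinom_succ_succ hq hk, hchoose, hshift, pow_add, pow_succ,
      ← pow_sub_mul_pow q hk.le]
    ring
  have hlast : (-1) ^ (n + 1) * qbinom q (n + 1) (n + 1) * q ^ ((n + 1 + 1).choose 2)
      / (1 - x * q ^ (n + 1)) = B n := by
    simp only [B, qbinom_self hq, hchoose, hshift, pow_add]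
    ring
  have hA : qPartialFractionSum q x n = A 0 + ∑ k ∈ range n, A (k + 1) := by
    rw [qPartialFractionSum, sum_range_succ', add_comm]
  have hB : -(q ^ (n + 1) * qPartialFractionSum q (x * q) n) = ∑ k ∈ range n, B k + B n := by
    rw [qPartialFractionSum, mul_sum, ← sum_neg_distrib, sum_range_succ]
  rw [sub_eq_add_neg, hA, hB, qPartialFractionSum, sum_range_succ', sum_range_succ, hlast,
    sum_congr rfl hmid, sum_add_distrib]
  simp only [A, qbinom_zero_right hq]
  ring

theorem qPartialFractionSum_eq {q x : ℝ} (hq : ∀ j : ℕ, q ^ (j + 1) ≠ 1)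
    (hx : ∀ k, 1 - x * q ^ k ≠ 0) (n : ℕ) :
    qPartialFractionSum q x n = qPoch q q n / qPoch x q (n + 1) := by
  induction n generalizing x with
  | zero => simp [qPartialFractionSum, qPoch, qbinom_zero_right hq]
  | succ n ih =>
    have hxq := one_sub_mul_mul_pow_ne_zero hx
    rw [qPartialFractionSum_succ hq, ih hx, ih hxq, qPoch_succ q q n,
      qPoch_succ' x q (n + 1), qPoch_succ' x q n, qPoch_succ (x * q) q n]
    have := qPoch_ne_zero hxq n
    have : 1 - x ≠ 0 := by simpa using hx 0
    have := hxq n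
    field_simp
    ring

lemma qnumR_add_natCast {q : ℝ} (hq0 : 0 < q) (y : ℝ) (k : ℕ) :
    qnumR q (y + k) = (1 - q ^ y * q ^ k) / (1 - q) := by
  rw [qnumR, Real.rpow_add hq0, Real.rpow_natCast]

/-- `Σ_{k=0}^{n} (-1)^k [n choose k]_q q^{binom(k+1,2) + ny} [y]_q/[y+k]_q
    = q^{ny} [n]_q! / ([y+1]_q [y+2]_q ⋯ [y+n]_q)`. -/
theorem stmt4 (q : ℝ) (hq0 : 0 < q) (hq1 : q < 1) (y : ℝ) (hy : 0 < y) (n : ℕ) :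
    ∑ k ∈ Finset.range (n + 1),
        (-1 : ℝ) ^ k * qbinom q n k
          * q ^ ((((k + 1).choose 2 : ℕ) : ℝ) + (n : ℝ) * y)
          * (qnumR q y / qnumR q (y + (k : ℝ)))
      = q ^ ((n : ℝ) * y) * (qfact q n / ∏ i ∈ Finset.range n, qnumR q (y + ((i : ℝ) + 1))) := by
  set a := q ^ y
  have hq : ∀ j : ℕ, q ^ (j + 1) ≠ 1 := fun j => (pow_lt_one₀ hq0.le hq1 j.succ_ne_zero).ne
  have ha : ∀ k : ℕ, 1 - a * q ^ k ≠ 0 := fun k =>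
    (sub_pos.mpr <| mul_lt_one_of_nonneg_of_lt_one_left (by positivity)
      (Real.rpow_lt_one hq0.le hq1 hy) (pow_le_one₀ hq0.le hq1.le)).ne'
  have hpow : q ^ ((n : ℝ) * y) = a ^ n := by
    rw [mul_comm, Real.rpow_mul hq0.le, Real.rpow_natCast]
  have hlhs : ∀ k ∈ range (n + 1),
      (-1 : ℝ) ^ k * qbinom q n k * q ^ ((((k + 1).choose 2 : ℕ) : ℝ) + (n : ℝ) * y)
          * (qnumR q y / qnumR q (y + (k : ℝ)))
        = a ^ n * (1 - a)
          * ((-1) ^ k * qbinom q n k * q ^ ((k + 1).choose 2) / (1 - a * q ^ k)) := by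
    intro k _
    rw [Real.rpow_add hq0, Real.rpow_natCast, hpow, qnumR_add_natCast hq0, qnumR,
      div_div_div_cancel_right₀ (sub_ne_zero.mpr hq1.ne')]
    ring
  have hrhs :
      ∏ i ∈ range n, qnumR q (y + ((i : ℝ) + 1)) = qPoch (a * q) q n / (1 - q) ^ n := by
    simp only [← Nat.cast_add_one, qnumR_add_natCast hq0, qPoch, prod_div_distrib, prod_const,
      card_range, pow_succ', mul_assoc]
    rfl
  rw [sum_congr rfl hlhs, ← mul_sum, ← qPartialFractionSum, qPartialFractionSum_eq hq ha,
    qPoch_succ', hrhs, qfact_eq_qPoch_div, hpow]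
  have := qPoch_ne_zero (one_sub_mul_mul_pow_ne_zero ha) n
  have : 1 - a ≠ 0 := by simpa using ha 0
  have := pow_ne_zero n (sub_ne_zero.mpr hq1.ne')
  field_simp
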